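/- Let K > 0 and adopt the boundary conventions φ_{0,j,k} = φ_{1,j,k}, φ_{i,0,k} = φ_{i,1,k}, φ_{i,j,0} = φ_{i,j,1}, and let h_σ = min_{j=0,…,N_σ} h_{σ,j}. Suppose that for all 1 ≤ i ≤ N1, 1 ≤ j ≤ N2, 1 ≤ k ≤ N3: (1/a²)[1/(h₁² φ_{i−1,j,k}) − 1/(h_{1,i−1} h_{1,i} φ_{i,j,k})] ≤ K/2, (1/b²)[1/(h₂² φ_{i,j−1,k}) − 1/(h_{2,j−1} h_{2,j} φ_{i,j,k})] ≤ K/2, and (1/c²)[1/(h₃² φ_{i,j,k−1}) − 1/(h_{3,k−1} h_{3,k} φ_{i,j,k})] ≤ K/2. Then the logarithmic norms satisfy μ(M_σ) ≤ K for σ = 1, 2, 3. -/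

import Mathlib

open Matrix
open scoped Kronecker

noncomputable section

namespace Kawarada

/-- The spectral norm (largest singular value) of a real matrix:
the operator norm of the induced map between Euclidean spaces. -/
noncomputable def specNorm {m : Type*} [Fintype m] [DecidableEq m]
    (A : Matrix m m ℝ) : ℝ :=
  ‖LinearMap.toContinuousLinearMap (Matrix.toEuclideanLin A)‖

/-- The `N × N` tridiagonal matrix `T` built from mesh steps `h 0, …, h N`.
Lean row/column index `i : Fin N` corresponds to the paper's index `i + 1`. -/
noncomputable def tridiag (N : ℕ) (h : ℕ → ℝ) : Matrix (Fin N) (Fin N) ℝ :=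
  Matrix.of fun i p =>
    if (i : ℕ) = (p : ℕ) then -2 / (h i * h ((i : ℕ) + 1))
    else if (i : ℕ) = (p : ℕ) + 1 then 2 / (h i * (h i + h ((i : ℕ) + 1)))
    else if (p : ℕ) = (i : ℕ) + 1 then 2 / (h ((i : ℕ) + 1) * (h i + h ((i : ℕ) + 1)))
    else 0

/-- `φ_{i,j,k}` for the paper's indices `i,j,k ≥ 1`. -/
noncomputable def phi (a b c q : ℝ) (h1 h2 h3 : ℕ → ℝ) (i j k : ℕ) : ℝ :=
  (a ^ 2 * (∑ ℓ ∈ Finset.range i, h1 ℓ) ^ 2 +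
      b ^ 2 * (∑ ℓ ∈ Finset.range j, h2 ℓ) ^ 2 +
      c ^ 2 * (∑ ℓ ∈ Finset.range k, h3 ℓ) ^ 2) ^ (q / 2)

/-- Index type for the vectorization: `i` (the `Fin N1` component) varies fastest. -/
abbrev Idx (N1 N2 N3 : ℕ) := Fin N3 × Fin N2 × Fin N1

/-- `φ` as a function of the vectorized index. -/
noncomputable def phiVec (N1 N2 N3 : ℕ) (a b c q : ℝ) (h1 h2 h3 : ℕ → ℝ)
    (p : Idx N1 N2 N3) : ℝ :=
  phi a b c q h1 h2 h3 ((p.2.2 : ℕ) + 1) ((p.2.1 : ℕ) + 1) ((p.1 : ℕ) + 1)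

/-- The diagonal matrix `B` with entries `φ_{i,j,k}⁻¹`. -/
noncomputable def Bdiag (N1 N2 N3 : ℕ) (a b c q : ℝ) (h1 h2 h3 : ℕ → ℝ) :
    Matrix (Idx N1 N2 N3) (Idx N1 N2 N3) ℝ :=
  Matrix.diagonal fun p => (phiVec N1 N2 N3 a b c q h1 h2 h3 p)⁻¹

/-- The matrices `M1, M2, M3`. -/
noncomputable def Mmat (N1 N2 N3 : ℕ) (a b c q : ℝ) (h1 h2 h3 : ℕ → ℝ) :
    Fin 3 → Matrix (Idx N1 N2 N3) (Idx N1 N2 N3) ℝ :=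
  ![(a ^ 2)⁻¹ •
      (Bdiag N1 N2 N3 a b c q h1 h2 h3 *
        ((1 : Matrix (Fin N3) (Fin N3) ℝ) ⊗ₖ
          ((1 : Matrix (Fin N2) (Fin N2) ℝ) ⊗ₖ tridiag N1 h1))),
    (b ^ 2)⁻¹ •
      (Bdiag N1 N2 N3 a b c q h1 h2 h3 *
        ((1 : Matrix (Fin N3) (Fin N3) ℝ) ⊗ₖ
          (tridiag N2 h2 ⊗ₖ (1 : Matrix (Fin N1) (Fin N1) ℝ)))),
    (c ^ 2)⁻¹ •
      (Bdiag N1 N2 N3 a b c q h1 h2 h3 *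
        (tridiag N3 h3 ⊗ₖ
          ((1 : Matrix (Fin N2) (Fin N2) ℝ) ⊗ₖ (1 : Matrix (Fin N1) (Fin N1) ℝ))))]

/-- The minimum of the mesh steps `h σ j`, `j = 0, …, N`, in one direction. -/
noncomputable def dirMin (N : ℕ) (h : ℕ → ℝ) : ℝ :=
  (Finset.range (N + 1)).inf' Finset.nonempty_range_add_one h

/-- The maximum of the mesh steps in one direction. -/
noncomputable def dirMax (N : ℕ) (h : ℕ → ℝ) : ℝ :=
  (Finset.range (N + 1)).sup' Finset.nonempty_range_add_one h

/-- `h = min{h_{σ,j}}`, the global minimal mesh step. -/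
noncomputable def meshMin (N1 N2 N3 : ℕ) (h1 h2 h3 : ℕ → ℝ) : ℝ :=
  min (dirMin N1 h1) (min (dirMin N2 h2) (dirMin N3 h3))

/-- `H = max{h_{σ,j}}`, the global maximal mesh step. -/
noncomputable def meshMax (N1 N2 N3 : ℕ) (h1 h2 h3 : ℕ → ℝ) : ℝ :=
  max (dirMax N1 h1) (max (dirMax N2 h2) (dirMax N3 h3))

/-- `β_min = (h²/2)(a² h_{1,0}² + b² h_{2,0}² + c² h_{3,0}²)^{q/2}`. -/
noncomputable def betaMin (N1 N2 N3 : ℕ) (a b c q : ℝ) (h1 h2 h3 : ℕ → ℝ) : ℝ :=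
  meshMin N1 N2 N3 h1 h2 h3 ^ 2 / 2 *
    (a ^ 2 * h1 0 ^ 2 + b ^ 2 * h2 0 ^ 2 + c ^ 2 * h3 0 ^ 2) ^ (q / 2)

/-- The CFL condition `τ/β_min < min{a², b², c²}`. -/
def CFL (N1 N2 N3 : ℕ) (a b c q : ℝ) (h1 h2 h3 : ℕ → ℝ) (τ : ℝ) : Prop :=
  τ / betaMin N1 N2 N3 a b c q h1 h2 h3 < min (a ^ 2) (min (b ^ 2) (c ^ 2))

/-- `φ_min = min φ_{i,j,k}` (for the grid-sizes `nσ + 2 ≥ 2`). -/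
noncomputable def phiMin (n1 n2 n3 : ℕ) (a b c q : ℝ) (h1 h2 h3 : ℕ → ℝ) : ℝ :=
  Finset.univ.inf' Finset.univ_nonempty
    (phiVec (n1 + 2) (n2 + 2) (n3 + 2) a b c q h1 h2 h3)

/-- The nonlinear source term `g`, acting componentwise: `g(v)_p = f(v_p)/φ_p`. -/
noncomputable def gvec (N1 N2 N3 : ℕ) (a b c q : ℝ) (h1 h2 h3 : ℕ → ℝ) (f : ℝ → ℝ)
    (v : Idx N1 N2 N3 → ℝ) : Idx N1 N2 N3 → ℝ :=
  fun p => f (v p) / phiVec N1 N2 N3 a b c q h1 h2 h3 p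

/-- The LOD propagator
`Φ(τ) = ∏_{σ=1}^3 (I − (τ/2)M_σ)⁻¹ (I + (τ/2)M_σ)`. -/
noncomputable def Phi (N1 N2 N3 : ℕ) (a b c q : ℝ) (h1 h2 h3 : ℕ → ℝ) (τ : ℝ) :
    Matrix (Idx N1 N2 N3) (Idx N1 N2 N3) ℝ :=
  (1 - (τ / 2) • Mmat N1 N2 N3 a b c q h1 h2 h3 0)⁻¹ *
    (1 + (τ / 2) • Mmat N1 N2 N3 a b c q h1 h2 h3 0) *
  ((1 - (τ / 2) • Mmat N1 N2 N3 a b c q h1 h2 h3 1)⁻¹ *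
    (1 + (τ / 2) • Mmat N1 N2 N3 a b c q h1 h2 h3 1)) *
  ((1 - (τ / 2) • Mmat N1 N2 N3 a b c q h1 h2 h3 2)⁻¹ *
    (1 + (τ / 2) • Mmat N1 N2 N3 a b c q h1 h2 h3 2))

theorem isHermitian_symPart {m : Type*} [Fintype m] (A : Matrix m m ℝ) :
    (((2 : ℝ)⁻¹ • (A + Aᵀ))).IsHermitian := by
  show _ᴴ = _
  ext i j
  simp [Matrix.conjTranspose_apply, Matrix.transpose_apply, Matrix.add_apply]
  ring

/-- The logarithmic norm associated with the spectral norm: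
`μ(A) = λ_max((A + Aᵀ)/2)`. -/
noncomputable def logNorm {m : Type*} [Fintype m] [DecidableEq m]
    (A : Matrix m m ℝ) : ℝ :=
  ⨆ i, (isHermitian_symPart A).eigenvalues i

/-- The Euclidean (`ℓ²`) norm of a vector. -/
noncomputable def vecNorm {m : Type*} [Fintype m] (x : m → ℝ) : ℝ :=
  Real.sqrt (∑ i, x i ^ 2)

/-!
The symmetric part `S` of `M_σ` decouples into the grid lines in direction `σ`; on each line it
is the symmetric part of `W T_σ`, where the weights `W = φ⁻¹/α` (`α = a², b², c²`) are positive
and nonincreasing along the line because `φ` grows with the distance from the origin. By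
Gershgorin's theorem `λ_max(S)` is at most the largest row quantity `S_ii + ∑_{j ≠ i} |S_ij|`.
The off-diagonal entries of `T_σ` are nonnegative and at most `1/h_σ²`, and both neighbours of
`i` carry weight at most `W_{i-1}`, so the row quantity is at most
`(2/α) (1/(h_σ² φ_{i-1}) - 1/(h_{σ,i-1} h_{σ,i} φ_i))`, which the hypothesis bounds by `K`.
-/

open Finset

section Gershgorin

variable {m : Type*} [Fintype m] [DecidableEq m]

theorem eigenvalues_le_of_row_bound {S : Matrix m m ℝ} (hS : S.IsHermitian)
    {K : ℝ} (hrow : ∀ p, S p p + ∑ p' ∈ univ.erase p, |S p p'| ≤ K) (i : m) :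
    hS.eigenvalues i ≤ K := by
  have hv : Module.End.HasEigenvalue (Matrix.toLin' S) (hS.eigenvalues i) := by
    refine Module.End.hasEigenvalue_of_hasEigenvector
      ⟨?_, (WithLp.ofLp_eq_zero 2).ne.2 (hS.eigenvectorBasis.orthonormal.ne_zero i)⟩
    rw [Module.End.mem_eigenspace_iff, Matrix.toLin'_apply]
    exact hS.mulVec_eigenvectorBasis i
  obtain ⟨p, hp⟩ := eigenvalue_mem_ball hv
  rw [Metric.mem_closedBall, Real.dist_eq] at hp
  simp only [Real.norm_eq_abs] at hp
  linarith [(abs_sub_le_iff.mp hp).1, hrow p]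

theorem logNorm_le_of_row_bound [Nonempty m] (A : Matrix m m ℝ) {K : ℝ}
    (hrow : ∀ p, ((2 : ℝ)⁻¹ • (A + Aᵀ)) p p +
      ∑ p' ∈ univ.erase p, |((2 : ℝ)⁻¹ • (A + Aᵀ)) p p'| ≤ K) :
    logNorm A ≤ K :=
  ciSup_le fun i => eigenvalues_le_of_row_bound (isHermitian_symPart A) hrow i

end Gershgorin

section Line

variable {ι κ ν : Type*} [DecidableEq κ]

theorem symPart_apply_of_line (e : ι ≃ κ × ν) {M : Matrix ι ι ℝ} {A : κ → Matrix ν ν ℝ}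
    (hM : ∀ x y, M x y = if (e x).1 = (e y).1 then A (e x).1 (e x).2 (e y).2 else 0)
    (x y : ι) :
    ((2 : ℝ)⁻¹ • (M + Mᵀ)) x y = if (e x).1 = (e y).1
      then ((2 : ℝ)⁻¹ • (A (e x).1 + (A (e x).1)ᵀ)) (e x).2 (e y).2 else 0 := by
  simp only [Matrix.smul_apply, Matrix.add_apply, transpose_apply, hM, smul_eq_mul,
    eq_comm (a := (e y).1)]
  split_ifs with hxy
  · rw [hxy]
  · simp

variable [Fintype ι] [DecidableEq ι] [Fintype κ] [Fintype ν] [DecidableEq ν]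

theorem diag_add_sum_erase_abs_of_line (e : ι ≃ κ × ν) {S : Matrix ι ι ℝ}
    {s : κ → Matrix ν ν ℝ}
    (hS : ∀ x y, S x y = if (e x).1 = (e y).1 then s (e x).1 (e x).2 (e y).2 else 0) (x : ι) :
    S x x + ∑ y ∈ univ.erase x, |S x y| =
      s (e x).1 (e x).2 (e x).2 + ∑ j ∈ univ.erase (e x).2, |s (e x).1 (e x).2 j| := by
  have hsum : ∑ y, |S x y| = ∑ j, |s (e x).1 (e x).2 j| := by
    rw [← e.symm.sum_comp, Fintype.sum_prod_type]
    simp [hS, apply_ite]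
  rw [sum_erase_eq_sub (mem_univ _), sum_erase_eq_sub (mem_univ _), hsum, hS x x]
  simp

theorem logNorm_le_of_line [Nonempty ι] (e : ι ≃ κ × ν) {M : Matrix ι ι ℝ}
    {A : κ → Matrix ν ν ℝ}
    (hM : ∀ x y, M x y = if (e x).1 = (e y).1 then A (e x).1 (e x).2 (e y).2 else 0) {K : ℝ}
    (hA : ∀ r i, ((2 : ℝ)⁻¹ • (A r + (A r)ᵀ)) i i +
      ∑ j ∈ univ.erase i, |((2 : ℝ)⁻¹ • (A r + (A r)ᵀ)) i j| ≤ K) :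
    logNorm M ≤ K :=
  logNorm_le_of_row_bound M fun x =>
    (diag_add_sum_erase_abs_of_line e
      (s := fun r => (2 : ℝ)⁻¹ • (A r + (A r)ᵀ)) (symPart_apply_of_line e hM) x).trans_le (hA _ _)

end Line

section Tridiag

variable {N : ℕ} {h : ℕ → ℝ}

theorem tridiag_apply_self (i : Fin N) : tridiag N h i i = -2 / (h i * h (i + 1)) := by
  simp [tridiag]

theorem tridiag_eq_zero_of_not_adjacent {i j : Fin N} (hij : i ≠ j)
    (hadj : ¬((j : ℕ) + 1 = i ∨ (i : ℕ) + 1 = j)) : tridiag N h i j = 0 := by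
  simp only [tridiag, of_apply]
  rw [if_neg (Fin.val_ne_of_ne hij), if_neg (by omega), if_neg (by omega)]

theorem two_div_mul_add_le {d x y z : ℝ} (hd : 0 < d) (hx : d ≤ x) (hy : d ≤ y) (hz : d ≤ z) :
    2 / (x * (y + z)) ≤ 1 / d ^ 2 := by
  rw [div_le_div_iff₀ (by nlinarith) (by positivity)]
  nlinarith [mul_le_mul hx (add_le_add hy hz) (by linarith) (by linarith)]

theorem tridiag_mem_Icc_of_ne {d : ℝ} (hd : 0 < d) (hdh : ∀ m ≤ N, d ≤ h m) {i j : Fin N}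
    (hij : i ≠ j) : tridiag N h i j ∈ Set.Icc 0 (1 / d ^ 2) := by
  have hi := hdh i (by omega)
  have hi' := hdh (i + 1) (by omega)
  have := hd.trans_le hi
  have := hd.trans_le hi'
  simp only [tridiag, of_apply]
  rw [if_neg (Fin.val_ne_of_ne hij)]
  split_ifs
  · exact ⟨by positivity, two_div_mul_add_le hd hi hi hi'⟩
  · exact ⟨by positivity, two_div_mul_add_le hd hi' hi hi'⟩
  · exact ⟨le_rfl, by positivity⟩

theorem card_filter_adjacent_le (s : Finset (Fin N)) (i : Fin N) :
    #(s.filter fun j : Fin N => (j : ℕ) + 1 = i ∨ (i : ℕ) + 1 = j) ≤ 2 := by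
  rw [filter_or]
  refine (card_union_le _ _).trans (Nat.add_le_add (b := 1) (d := 1) ?_ ?_) <;>
    exact card_le_one.mpr fun x hx y hy => by
      simp only [mem_filter] at hx hy
      exact Fin.ext (by omega)

theorem symPart_diagonal_mul_apply {m : Type*} [Fintype m] [DecidableEq m] (w : m → ℝ)
    (T : Matrix m m ℝ) (i j : m) :
    ((2 : ℝ)⁻¹ • (diagonal w * T + (diagonal w * T)ᵀ)) i j = 2⁻¹ * (w i * T i j + w j * T j i) := by
  simp [diagonal_mul, mul_comm]

theorem abs_symPart_diagonal_mul_tridiag_le {w : ℕ → ℝ} {d : ℝ} (hd : 0 < d)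
    (hdh : ∀ m ≤ N, d ≤ h m) (hw0 : ∀ m < N, 0 ≤ w m) (hw : AntitoneOn w (Set.Iio N))
    {i j : Fin N} (hij : i ≠ j) (hadj : (j : ℕ) + 1 = i ∨ (i : ℕ) + 1 = j) :
    |2⁻¹ * (w i * tridiag N h i j + w j * tridiag N h j i)| ≤ w (i - 1) / d ^ 2 := by
  have hW : ∀ m : Fin N, (i : ℕ) ≤ m + 1 → (m : ℕ) ≤ i + 1 → w m ≤ w (i - 1) := fun m _ _ =>
    hw (show (i : ℕ) - 1 < N by omega) m.isLt (by omega)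
  have hT := tridiag_mem_Icc_of_ne hd hdh hij
  have hT' := tridiag_mem_Icc_of_ne hd hdh (h := h) hij.symm
  have hwi := hW i (by omega) (by omega)
  have hwj := hW j (by omega) (by omega)
  have h1 : w i * tridiag N h i j ≤ w (i - 1) * (1 / d ^ 2) :=
    mul_le_mul hwi hT.2 hT.1 ((hw0 i i.isLt).trans hwi)
  have h2 : w j * tridiag N h j i ≤ w (i - 1) * (1 / d ^ 2) :=
    mul_le_mul hwj hT'.2 hT'.1 ((hw0 j j.isLt).trans hwj)
  rw [abs_of_nonneg (by nlinarith [hT.1, hT'.1, hw0 i i.isLt, hw0 j j.isLt])]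
  rw [mul_one_div] at h1 h2
  linarith

theorem symPart_diagonal_mul_tridiag_row_le {w : ℕ → ℝ} {d : ℝ} (hd : 0 < d)
    (hdh : ∀ m ≤ N, d ≤ h m) (hw0 : ∀ m < N, 0 ≤ w m) (hw : AntitoneOn w (Set.Iio N))
    (i : Fin N) :
    let A := diagonal (fun m : Fin N => w m) * tridiag N h
    ((2 : ℝ)⁻¹ • (A + Aᵀ)) i i + ∑ j ∈ univ.erase i, |((2 : ℝ)⁻¹ • (A + Aᵀ)) i j| ≤
      2 * (w (i - 1) / d ^ 2 - w i / (h i * h (i + 1))) := by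
  intro A
  simp only [A, symPart_diagonal_mul_apply]
  have hsupp : ∀ j ∈ univ.erase i,
      |2⁻¹ * (w i * tridiag N h i j + w j * tridiag N h j i)| ≠ 0 →
        (j : ℕ) + 1 = i ∨ (i : ℕ) + 1 = j := by
    intro j hj hne
    by_contra hadj
    have hji := ne_of_mem_erase hj
    rw [tridiag_eq_zero_of_not_adjacent hji.symm hadj,
      tridiag_eq_zero_of_not_adjacent hji (by omega)] at hne
    simp at hne
  have hoff : ∑ j ∈ univ.erase i, |2⁻¹ * (w i * tridiag N h i j + w j * tridiag N h j i)| ≤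
      2 * (w (i - 1) / d ^ 2) := by
    rw [← sum_filter_of_ne hsupp]
    refine (sum_le_card_nsmul _ _ (w (i - 1) / d ^ 2) fun j hj => ?_).trans ?_
    · simp only [mem_filter, mem_erase] at hj
      exact abs_symPart_diagonal_mul_tridiag_le hd hdh hw0 hw hj.1.1.symm hj.2
    · rw [nsmul_eq_mul]
      gcongr
      · exact div_nonneg (hw0 _ (by omega)) (by positivity)
      · exact_mod_cast card_filter_adjacent_le _ i
  rw [tridiag_apply_self]
  linarith [show 2⁻¹ * (w i * (-2 / (h i * h (i + 1))) + w i * (-2 / (h i * h (i + 1)))) =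
    -(2 * (w i / (h i * h (i + 1)))) by ring]

end Tridiag

theorem dirMin_pos {N : ℕ} {h : ℕ → ℝ} (hpos : ∀ m ≤ N, 0 < h m) : 0 < dirMin N h :=
  (lt_inf'_iff _).mpr fun m hm => hpos m (Nat.lt_succ_iff.mp (mem_range.mp hm))

theorem dirMin_le {N : ℕ} {h : ℕ → ℝ} {m : ℕ} (hm : m ≤ N) : dirMin N h ≤ h m :=
  inf'_le h (mem_range.mpr (Nat.lt_succ_of_le hm))

/-- At `i = 0` the term `ψ r (i - 1)` is `ψ r 0` (truncated subtraction): this realises the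
boundary convention `φ₀ = φ₁`. -/
theorem logNorm_le_of_tridiag_lines {ι κ : Type*} [Fintype ι] [DecidableEq ι] [Nonempty ι]
    [Fintype κ] [DecidableEq κ] {N : ℕ} (e : ι ≃ κ × Fin N) {M : Matrix ι ι ℝ} {α : ℝ}
    {h : ℕ → ℝ} {ψ : κ → ℕ → ℝ}
    (hM : ∀ x y, M x y = if (e x).1 = (e y).1
      then α⁻¹ * (ψ (e x).1 (e x).2)⁻¹ * tridiag N h (e x).2 (e y).2 else 0)
    (hα : 0 ≤ α) (hh : ∀ m ≤ N, 0 < h m) (hψ : ∀ r, ∀ m < N, 0 < ψ r m)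
    (hψ_mono : ∀ r, MonotoneOn (ψ r) (Set.Iio N)) {K : ℝ}
    (hK : ∀ r, ∀ i < N,
      α⁻¹ * (1 / (dirMin N h ^ 2 * ψ r (i - 1)) - 1 / (h i * h (i + 1) * ψ r i)) ≤ K / 2) :
    logNorm M ≤ K := by
  set w : κ → ℕ → ℝ := fun r m => α⁻¹ * (ψ r m)⁻¹
  refine logNorm_le_of_line e (A := fun r => diagonal (fun m : Fin N => w r m) * tridiag N h)
    (fun x y => by rw [hM]; simp only [diagonal_mul, w]) fun r i => ?_
  have hw0 : ∀ m < N, 0 ≤ w r m := fun m hm => by have := hψ r m hm; positivity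
  have hw : AntitoneOn (w r) (Set.Iio N) := fun m hm m' hm' hmm' =>
    mul_le_mul_of_nonneg_left (inv_anti₀ (hψ r m hm) (hψ_mono r hm hm' hmm')) (by positivity)
  calc _ ≤ 2 * (w r (i - 1) / dirMin N h ^ 2 - w r i / (h i * h (i + 1))) :=
        symPart_diagonal_mul_tridiag_row_le (dirMin_pos hh) (fun m hm => dirMin_le hm) hw0 hw i
    _ = 2 * (α⁻¹ * (1 / (dirMin N h ^ 2 * ψ r (i - 1)) - 1 / (h i * h (i + 1) * ψ r i))) := by
        simp only [w]
        ring
    _ ≤ K := by linarith [hK r i i.isLt]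

section Phi

variable {a b c q : ℝ} {h1 h2 h3 : ℕ → ℝ}

theorem phi_pos (ha : 0 < a) {i : ℕ} (hi : 0 < i) (h1pos : ∀ ℓ < i, 0 < h1 ℓ) (j k : ℕ) :
    0 < phi a b c q h1 h2 h3 i j k := by
  have : 0 < ∑ ℓ ∈ range i, h1 ℓ :=
    sum_pos (fun ℓ hℓ => h1pos ℓ (mem_range.mp hℓ)) (nonempty_range_iff.mpr hi.ne')
  unfold phi
  positivity

theorem sq_sum_range_le_sq_sum_range {h : ℕ → ℝ} {i i' : ℕ} (hii' : i ≤ i')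
    (hh : ∀ ℓ < i', 0 ≤ h ℓ) : (∑ ℓ ∈ range i, h ℓ) ^ 2 ≤ (∑ ℓ ∈ range i', h ℓ) ^ 2 :=
  pow_le_pow_left₀ (sum_nonneg fun ℓ hℓ => hh ℓ ((mem_range.mp hℓ).trans_le hii'))
    (sum_le_sum_of_subset_of_nonneg (range_subset_range.mpr hii')
      fun ℓ hℓ _ => hh ℓ (mem_range.mp hℓ)) 2

theorem phi_le_phi (hq : 0 ≤ q) {i i' j j' k k' : ℕ} (hii' : i ≤ i') (hjj' : j ≤ j')
    (hkk' : k ≤ k') (hh1 : ∀ ℓ < i', 0 ≤ h1 ℓ) (hh2 : ∀ ℓ < j', 0 ≤ h2 ℓ)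
    (hh3 : ∀ ℓ < k', 0 ≤ h3 ℓ) :
    phi a b c q h1 h2 h3 i j k ≤ phi a b c q h1 h2 h3 i' j' k' := by
  unfold phi
  gcongr ?_ ^ _
  gcongr _ * ?_ + _ * ?_ + _ * ?_
  exacts [sq_sum_range_le_sq_sum_range hii' hh1, sq_sum_range_le_sq_sum_range hjj' hh2,
    sq_sum_range_le_sq_sum_range hkk' hh3]

end Phi

theorem logNorm_Mmat_zero_le {N1 N2 N3 : ℕ} [NeZero N1] [NeZero N2] [NeZero N3] {a b c q : ℝ}
    (ha : 0 < a) (hq : 0 ≤ q) {h1 h2 h3 : ℕ → ℝ} (hpos1 : ∀ j ≤ N1, 0 < h1 j)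
    (hpos2 : ∀ j ≤ N2, 0 < h2 j) (hpos3 : ∀ j ≤ N3, 0 < h3 j) {K : ℝ}
    (hS1 : ∀ i j k : ℕ, 1 ≤ i → i ≤ N1 → 1 ≤ j → j ≤ N2 → 1 ≤ k → k ≤ N3 →
      (a ^ 2)⁻¹ * (1 / (dirMin N1 h1 ^ 2 * phi a b c q h1 h2 h3 (max (i - 1) 1) j k) -
        1 / (h1 (i - 1) * h1 i * phi a b c q h1 h2 h3 i j k)) ≤ K / 2) :
    logNorm (Mmat N1 N2 N3 a b c q h1 h2 h3 0) ≤ K := by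
  refine logNorm_le_of_tridiag_lines (Equiv.prodAssoc _ _ _).symm (α := a ^ 2)
    (ψ := fun (r : Fin N3 × Fin N2) m => phi a b c q h1 h2 h3 (m + 1) (r.2 + 1) (r.1 + 1))
    (fun x y => ?_) (by positivity) hpos1
    (fun r m hm => phi_pos ha m.succ_pos (fun ℓ hℓ => hpos1 ℓ (by omega)) _ _)
    (fun r m hm m' hm' hmm' => phi_le_phi hq (by omega) le_rfl le_rfl
      (fun ℓ hℓ => (hpos1 ℓ (by rw [Set.mem_Iio] at hm'; omega)).le)
      (fun ℓ hℓ => (hpos2 ℓ (by omega)).le)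
      (fun ℓ hℓ => (hpos3 ℓ (by omega)).le))
    (fun r i hi => ?_)
  · simp [Mmat, Bdiag, phiVec, diagonal_mul, one_apply, ite_and, mul_assoc, mul_comm]
  · have := hS1 (i + 1) (r.2 + 1) (r.1 + 1) (by omega) (by omega) (by omega) (by omega)
      (by omega) (by omega)
    rwa [Nat.add_sub_cancel, show max i 1 = i - 1 + 1 by omega] at this

theorem logNorm_Mmat_one_le {N1 N2 N3 : ℕ} [NeZero N1] [NeZero N2] [NeZero N3] {a b c q : ℝ}
    (ha : 0 < a) (hq : 0 ≤ q) {h1 h2 h3 : ℕ → ℝ} (hpos1 : ∀ j ≤ N1, 0 < h1 j)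
    (hpos2 : ∀ j ≤ N2, 0 < h2 j) (hpos3 : ∀ j ≤ N3, 0 < h3 j) {K : ℝ}
    (hS2 : ∀ i j k : ℕ, 1 ≤ i → i ≤ N1 → 1 ≤ j → j ≤ N2 → 1 ≤ k → k ≤ N3 →
      (b ^ 2)⁻¹ * (1 / (dirMin N2 h2 ^ 2 * phi a b c q h1 h2 h3 i (max (j - 1) 1) k) -
        1 / (h2 (j - 1) * h2 j * phi a b c q h1 h2 h3 i j k)) ≤ K / 2) :
    logNorm (Mmat N1 N2 N3 a b c q h1 h2 h3 1) ≤ K := by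
  refine logNorm_le_of_tridiag_lines
    ((Equiv.prodCongr (Equiv.refl _) (Equiv.prodComm _ _)).trans (Equiv.prodAssoc _ _ _).symm)
    (α := b ^ 2)
    (ψ := fun (r : Fin N3 × Fin N1) m => phi a b c q h1 h2 h3 (r.2 + 1) (m + 1) (r.1 + 1))
    (fun x y => ?_) (by positivity) hpos2
    (fun r m hm => phi_pos ha r.2.succ_pos (fun ℓ hℓ => hpos1 ℓ (by omega)) _ _)
    (fun r m hm m' hm' hmm' => phi_le_phi hq le_rfl (by omega) le_rfl
      (fun ℓ hℓ => (hpos1 ℓ (by omega)).le)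
      (fun ℓ hℓ => (hpos2 ℓ (by rw [Set.mem_Iio] at hm'; omega)).le)
      (fun ℓ hℓ => (hpos3 ℓ (by omega)).le))
    (fun r i hi => ?_)
  · simp [Mmat, Bdiag, phiVec, diagonal_mul, one_apply, ite_and, mul_assoc, mul_comm]
  · have := hS2 (r.2 + 1) (i + 1) (r.1 + 1) (by omega) (by omega) (by omega) (by omega)
      (by omega) (by omega)
    rwa [Nat.add_sub_cancel, show max i 1 = i - 1 + 1 by omega] at this

theorem logNorm_Mmat_two_le {N1 N2 N3 : ℕ} [NeZero N1] [NeZero N2] [NeZero N3] {a b c q : ℝ}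
    (ha : 0 < a) (hq : 0 ≤ q) {h1 h2 h3 : ℕ → ℝ} (hpos1 : ∀ j ≤ N1, 0 < h1 j)
    (hpos2 : ∀ j ≤ N2, 0 < h2 j) (hpos3 : ∀ j ≤ N3, 0 < h3 j) {K : ℝ}
    (hS3 : ∀ i j k : ℕ, 1 ≤ i → i ≤ N1 → 1 ≤ j → j ≤ N2 → 1 ≤ k → k ≤ N3 →
      (c ^ 2)⁻¹ * (1 / (dirMin N3 h3 ^ 2 * phi a b c q h1 h2 h3 i j (max (k - 1) 1)) -
        1 / (h3 (k - 1) * h3 k * phi a b c q h1 h2 h3 i j k)) ≤ K / 2) :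
    logNorm (Mmat N1 N2 N3 a b c q h1 h2 h3 2) ≤ K := by
  refine logNorm_le_of_tridiag_lines (Equiv.prodComm _ _) (α := c ^ 2)
    (ψ := fun (r : Fin N2 × Fin N1) m => phi a b c q h1 h2 h3 (r.2 + 1) (r.1 + 1) (m + 1))
    (fun x y => ?_) (by positivity) hpos3
    (fun r m hm => phi_pos ha r.2.succ_pos (fun ℓ hℓ => hpos1 ℓ (by omega)) _ _)
    (fun r m hm m' hm' hmm' => phi_le_phi hq le_rfl le_rfl (by omega)
      (fun ℓ hℓ => (hpos1 ℓ (by omega)).le) (fun ℓ hℓ => (hpos2 ℓ (by omega)).le)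
      (fun ℓ hℓ => (hpos3 ℓ (by rw [Set.mem_Iio] at hm'; omega)).le))
    (fun r i hi => ?_)
  · simp [Mmat, Bdiag, phiVec, diagonal_mul, one_apply, mul_assoc, mul_comm]
  · have := hS3 (r.2 + 1) (r.1 + 1) (i + 1) (by omega) (by omega) (by omega) (by omega)
      (by omega) (by omega)
    rwa [Nat.add_sub_cancel, show max i 1 = i - 1 + 1 by omega] at this

theorem statement11_general (n1 n2 n3 : ℕ) (a b c q : ℝ)
    (ha : 0 < a) (hq0 : 0 ≤ q)
    (h1 h2 h3 : ℕ → ℝ)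
    (hpos1 : ∀ j ≤ n1 + 2, 0 < h1 j)
    (hpos2 : ∀ j ≤ n2 + 2, 0 < h2 j)
    (hpos3 : ∀ j ≤ n3 + 2, 0 < h3 j)
    (K : ℝ)
    (hS1 : ∀ i j k : ℕ, 1 ≤ i → i ≤ n1 + 2 → 1 ≤ j → j ≤ n2 + 2 → 1 ≤ k → k ≤ n3 + 2 →
      (a ^ 2)⁻¹ * (1 / (dirMin (n1 + 2) h1 ^ 2 * phi a b c q h1 h2 h3 (max (i - 1) 1) j k) -
        1 / (h1 (i - 1) * h1 i * phi a b c q h1 h2 h3 i j k)) ≤ K / 2)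
    (hS2 : ∀ i j k : ℕ, 1 ≤ i → i ≤ n1 + 2 → 1 ≤ j → j ≤ n2 + 2 → 1 ≤ k → k ≤ n3 + 2 →
      (b ^ 2)⁻¹ * (1 / (dirMin (n2 + 2) h2 ^ 2 * phi a b c q h1 h2 h3 i (max (j - 1) 1) k) -
        1 / (h2 (j - 1) * h2 j * phi a b c q h1 h2 h3 i j k)) ≤ K / 2)
    (hS3 : ∀ i j k : ℕ, 1 ≤ i → i ≤ n1 + 2 → 1 ≤ j → j ≤ n2 + 2 → 1 ≤ k → k ≤ n3 + 2 →
      (c ^ 2)⁻¹ * (1 / (dirMin (n3 + 2) h3 ^ 2 * phi a b c q h1 h2 h3 i j (max (k - 1) 1)) -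
        1 / (h3 (k - 1) * h3 k * phi a b c q h1 h2 h3 i j k)) ≤ K / 2) :
    ∀ σ : Fin 3, logNorm (Mmat (n1 + 2) (n2 + 2) (n3 + 2) a b c q h1 h2 h3 σ) ≤ K := by
  intro σ
  fin_cases σ
  · exact logNorm_Mmat_zero_le ha hq0 hpos1 hpos2 hpos3 hS1
  · exact logNorm_Mmat_one_le ha hq0 hpos1 hpos2 hpos3 hS2
  · exact logNorm_Mmat_two_le ha hq0 hpos1 hpos2 hpos3 hS3

/-- under the mesh-regularity conditions (S1)–(S3) (with the
boundary conventions `φ₀ⱼₖ = φ₁ⱼₖ` etc.), the logarithmic norms satisfy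
`μ(M_σ) ≤ K` for `σ = 1,2,3`. -/
theorem statement11 (n1 n2 n3 : ℕ) (a b c q : ℝ)
    (ha : 0 < a) (hb : 0 < b) (hc : 0 < c) (hq0 : 0 ≤ q) (hq2 : q ≤ 2)
    (h1 h2 h3 : ℕ → ℝ)
    (hpos1 : ∀ j ≤ n1 + 2, 0 < h1 j)
    (hpos2 : ∀ j ≤ n2 + 2, 0 < h2 j)
    (hpos3 : ∀ j ≤ n3 + 2, 0 < h3 j)
    (K : ℝ) (hK : 0 < K)
    (hS1 : ∀ i j k : ℕ, 1 ≤ i → i ≤ n1 + 2 → 1 ≤ j → j ≤ n2 + 2 → 1 ≤ k → k ≤ n3 + 2 →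
      (a ^ 2)⁻¹ * (1 / (dirMin (n1 + 2) h1 ^ 2 * phi a b c q h1 h2 h3 (max (i - 1) 1) j k) -
        1 / (h1 (i - 1) * h1 i * phi a b c q h1 h2 h3 i j k)) ≤ K / 2)
    (hS2 : ∀ i j k : ℕ, 1 ≤ i → i ≤ n1 + 2 → 1 ≤ j → j ≤ n2 + 2 → 1 ≤ k → k ≤ n3 + 2 →
      (b ^ 2)⁻¹ * (1 / (dirMin (n2 + 2) h2 ^ 2 * phi a b c q h1 h2 h3 i (max (j - 1) 1) k) -
        1 / (h2 (j - 1) * h2 j * phi a b c q h1 h2 h3 i j k)) ≤ K / 2)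
    (hS3 : ∀ i j k : ℕ, 1 ≤ i → i ≤ n1 + 2 → 1 ≤ j → j ≤ n2 + 2 → 1 ≤ k → k ≤ n3 + 2 →
      (c ^ 2)⁻¹ * (1 / (dirMin (n3 + 2) h3 ^ 2 * phi a b c q h1 h2 h3 i j (max (k - 1) 1)) -
        1 / (h3 (k - 1) * h3 k * phi a b c q h1 h2 h3 i j k)) ≤ K / 2) :
    ∀ σ : Fin 3, logNorm (Mmat (n1 + 2) (n2 + 2) (n3 + 2) a b c q h1 h2 h3 σ) ≤ K :=
  statement11_general n1 n2 n3 a b c q ha hq0 h1 h2 h3 hpos1 hpos2 hpos3 K hS1 hS2 hS3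

end Kawarada
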